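/- Fix real k_s, k_m, k_ℓ with k_m ≥ 0 and set 𝛂 = k_s + k_ℓ − 1/2, 𝛃 = k_ℓ − 1/2. Let P ⊂ ℂ^r be the union of all members of Π_k. Then P is stable under the action of W, and the set S = {(ξ_1,…,ξ_i, √−1 μ_{i+1},…,√−1 μ_r) : 0 ≤ i ≤ r, (ξ_1,…,ξ_i) ∈ D_k(Θ_i), μ_{i+1},…,μ_r ∈ ℝ with 0 ≤ μ_{i+1} ≤ ⋯ ≤ μ_r} is a complete set of representatives for the W-orbits in P; that is, for every p ∈ P the orbit W·p intersects S in exactly one point. -/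

import Mathlib

noncomputable section

/-- The set `D_k(Θ_i)` of discrete spectral parameters (for `i = 0` this is the
singleton consisting of the empty tuple). -/
def DkSet (α β km : ℝ) (i : ℕ) : Set (Fin i → ℝ) :=
  {ξ | (∀ h : 0 < i, ∃ n : ℕ, ξ ⟨0, h⟩ + |β| - α - 1 = 2 * (n : ℝ)) ∧
       (∀ h : 0 < i, ξ ⟨i - 1, by omega⟩ < 0) ∧
       (∀ j : ℕ, ∀ h : j + 1 < i,
         ∃ n : ℕ, ξ ⟨j + 1, h⟩ - ξ ⟨j, by omega⟩ - 2 * km = 2 * (n : ℝ))}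

/-- Action on `ℂ^r` of the element of the Weyl group of type `BC_r` given by the
sign vector `ε` and the permutation `σ`. -/
def wActC (r : ℕ) (ε : Fin r → ℤˣ) (σ : Equiv.Perm (Fin r)) (z : Fin r → ℂ) : Fin r → ℂ :=
  fun j => ((ε j : ℤ) : ℂ) * z (σ⁻¹ j)

/-- The set `{(ξ_1, …, ξ_i, √−1 t_{i+1}, …, √−1 t_r) : t ∈ ℝ^{r−i}} ⊆ ℂ^r`. -/
def baseSet (r i : ℕ) (ξ : Fin i → ℝ) : Set (Fin r → ℂ) :=
  {z | (∀ j : Fin r, ∀ h : (j : ℕ) < i, z j = ((ξ ⟨(j : ℕ), h⟩ : ℝ) : ℂ)) ∧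
       (∀ j : Fin r, i ≤ (j : ℕ) → (z j).re = 0)}

/-- The union `P` of all tempered residual subspaces. -/
def bigP (α β km : ℝ) (r : ℕ) : Set (Fin r → ℂ) :=
  {z | ∃ i : ℕ, i ≤ r ∧ ∃ ξ : Fin i → ℝ, ξ ∈ DkSet α β km i ∧
    ∃ (ε : Fin r → ℤˣ) (σ : Equiv.Perm (Fin r)), z ∈ wActC r ε σ '' baseSet r i ξ}

/-- The set `S` of representatives
`(ξ_1, …, ξ_i, √−1 μ_{i+1}, …, √−1 μ_r)` with `0 ≤ μ_{i+1} ≤ ⋯ ≤ μ_r`. -/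
def repS (α β km : ℝ) (r : ℕ) : Set (Fin r → ℂ) :=
  {z | ∃ i : ℕ, i ≤ r ∧ ∃ ξ : Fin i → ℝ, ξ ∈ DkSet α β km i ∧
    (∀ j : Fin r, ∀ h : (j : ℕ) < i, z j = ((ξ ⟨(j : ℕ), h⟩ : ℝ) : ℂ)) ∧
    (∀ j : Fin r, i ≤ (j : ℕ) → (z j).re = 0 ∧ 0 ≤ (z j).im) ∧
    (∀ p q : Fin r, i ≤ (q : ℕ) → (q : ℕ) ≤ (p : ℕ) → (z q).im ≤ (z p).im)}

/-!
Every coordinate of a point of `P` is real or purely imaginary, and `W` acts on coordinates by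
permutations and sign changes. The key `c ↦ |Im c| - |Re c|` is invariant under sign changes and
recovers `c` when `c` is a negative real or a nonnegative multiple of `√−1`, which are exactly the
coordinates allowed in `S`; so a point of `S` is the arrangement of its orbit with monotone keys,
and it is unique because a monotone rearrangement of a monotone tuple is the tuple itself.
For existence, sort the keys. Since `k_m ≥ 0`, the tuple `ξ` is increasing and negative, so the
keys of the base point clipped at `0` are already monotone; sorting cannot change them, which puts
`ξ` in front and the nonnegative keys behind it.
-/

lemma comp_perm_eq_of_monotone {α : Type*} [LinearOrder α] {n : ℕ} {f : Fin n → α}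
    {σ : Equiv.Perm (Fin n)} (hf : Monotone f) (hσ : Monotone (f ∘ σ)) : f ∘ σ = f := by
  rw [Tuple.comp_sort_eq_comp_iff_monotone.2 hσ, Tuple.sort_eq_refl_iff_monotone.2 hf]
  rfl

namespace DkSet

variable {α β km : ℝ} {i : ℕ} {ξ : Fin i → ℝ}

lemma monotone (hkm : 0 ≤ km) (hξ : ξ ∈ DkSet α β km i) : Monotone ξ := by
  obtain _ | i := i
  · exact fun a => a.elim0
  refine Fin.monotone_iff_le_succ.2 fun j => ?_
  obtain ⟨m, hm⟩ := hξ.2.2 j (Nat.succ_lt_succ j.2)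
  have : (0 : ℝ) ≤ m := m.cast_nonneg
  change ξ ⟨j, _⟩ ≤ ξ ⟨j + 1, _⟩
  linarith

lemma lt_zero (hkm : 0 ≤ km) (hξ : ξ ∈ DkSet α β km i) (j : Fin i) : ξ j < 0 :=
  (DkSet.monotone hkm hξ (Fin.le_iff_val_le_val.2 (by omega : (j : ℕ) ≤ i - 1))).trans_lt
    (hξ.2.1 j.pos)

end DkSet

lemma wActC_wActC (r : ℕ) (ε ε' : Fin r → ℤˣ) (σ σ' : Equiv.Perm (Fin r)) (z : Fin r → ℂ) :
    wActC r ε σ (wActC r ε' σ' z) = wActC r (fun j => ε j * ε' (σ⁻¹ j)) (σ * σ') z := by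
  funext j
  simp [wActC, mul_assoc]

def coordKey (c : ℂ) : ℝ := |c.im| - |c.re|

def ofCoordKey (t : ℝ) : ℂ := if t < 0 then (t : ℂ) else t * Complex.I

lemma coordKey_units_mul (e : ℤˣ) (c : ℂ) : coordKey (((e : ℤ) : ℂ) * c) = coordKey c := by
  rcases Int.units_eq_one_or e with rfl | rfl <;> simp [coordKey]

lemma coordKey_wActC {r : ℕ} (ε : Fin r → ℤˣ) (σ : Equiv.Perm (Fin r)) (z : Fin r → ℂ)
    (j : Fin r) : coordKey (wActC r ε σ z j) = coordKey (z (σ⁻¹ j)) :=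
  coordKey_units_mul _ _

lemma coordKey_ofReal_of_neg {x : ℝ} (hx : x < 0) : coordKey x = x := by
  simp [coordKey, abs_of_neg hx]

lemma coordKey_of_re_eq_zero {c : ℂ} (hc : c.re = 0) : coordKey c = |c.im| := by
  simp [coordKey, hc]

lemma ofCoordKey_of_neg {t : ℝ} (ht : t < 0) : ofCoordKey t = t := if_pos ht

lemma ofCoordKey_of_nonneg {t : ℝ} (ht : 0 ≤ t) : ofCoordKey t = t * Complex.I :=
  if_neg ht.not_gt

lemma ofCoordKey_coordKey_of_re_neg {c : ℂ} (hre : c.re < 0) (him : c.im = 0) :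
    ofCoordKey (coordKey c) = c := by
  have hkey : coordKey c = c.re := by simp [coordKey, him, abs_of_neg hre]
  rw [hkey, ofCoordKey_of_neg hre]
  exact Complex.ext (by simp) (by simp [him])

lemma ofCoordKey_coordKey_of_im_nonneg {c : ℂ} (hre : c.re = 0) (him : 0 ≤ c.im) :
    ofCoordKey (coordKey c) = c := by
  have hkey : coordKey c = c.im := by simp [coordKey, hre, abs_of_nonneg him]
  rw [hkey, ofCoordKey_of_nonneg him]
  exact Complex.ext (by simp [hre]) (by simp)

lemma exists_ofCoordKey_coordKey_eq_units_mul {c : ℂ} (hc : c.re = 0 ∨ c.im = 0) :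
    ∃ e : ℤˣ, ofCoordKey (coordKey c) = ((e : ℤ) : ℂ) * c := by
  have hneg : coordKey (-c) = coordKey c := by simp [coordKey]
  by_cases hre : c.re = 0
  · rcases le_total 0 c.im with him | him
    · exact ⟨1, by simp [ofCoordKey_coordKey_of_im_nonneg hre him]⟩
    · refine ⟨-1, ?_⟩
      simpa [hneg] using
        ofCoordKey_coordKey_of_im_nonneg (c := -c) (by simp [hre]) (by simpa using him)
  · have him := hc.resolve_left hre
    rcases lt_or_gt_of_ne hre with hre | hre
    · exact ⟨1, by simp [ofCoordKey_coordKey_of_re_neg hre him]⟩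
    · refine ⟨-1, ?_⟩
      simpa [hneg] using
        ofCoordKey_coordKey_of_re_neg (c := -c) (by simpa using hre) (by simp [him])

section repS

variable {α β km : ℝ} {r : ℕ} {s : Fin r → ℂ}

lemma monotone_coordKey_comp_of_mem_repS (hkm : 0 ≤ km) (hs : s ∈ repS α β km r) :
    Monotone (coordKey ∘ s) := by
  obtain ⟨i, -, ξ, hξ, hpre, htail, hsort⟩ := hs
  have hkey_pre (j : Fin r) (hj : (j : ℕ) < i) : coordKey (s j) = ξ ⟨j, hj⟩ := by
    rw [hpre j hj, coordKey_ofReal_of_neg (DkSet.lt_zero hkm hξ _)]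
  have hkey_tail (j : Fin r) (hj : i ≤ (j : ℕ)) : coordKey (s j) = (s j).im := by
    rw [coordKey_of_re_eq_zero (htail j hj).1, abs_of_nonneg (htail j hj).2]
  intro p q hpq
  simp only [Function.comp_apply]
  by_cases hq : (q : ℕ) < i
  · have hp : (p : ℕ) < i := lt_of_le_of_lt hpq hq
    rw [hkey_pre p hp, hkey_pre q hq]
    exact DkSet.monotone hkm hξ hpq
  · rw [hkey_tail q (not_lt.1 hq)]
    by_cases hp : (p : ℕ) < i
    · rw [hkey_pre p hp]
      exact (DkSet.lt_zero hkm hξ _).le.trans (htail q (not_lt.1 hq)).2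
    · rw [hkey_tail p (not_lt.1 hp)]
      exact hsort q p (not_lt.1 hp) hpq

lemma ofCoordKey_coordKey_of_mem_repS (hkm : 0 ≤ km) (hs : s ∈ repS α β km r) (j : Fin r) :
    ofCoordKey (coordKey (s j)) = s j := by
  obtain ⟨i, -, ξ, hξ, hpre, htail, -⟩ := hs
  by_cases hj : (j : ℕ) < i
  · rw [hpre j hj]
    exact ofCoordKey_coordKey_of_re_neg (by simpa using DkSet.lt_zero hkm hξ _) (by simp)
  · exact ofCoordKey_coordKey_of_im_nonneg (htail j (not_lt.1 hj)).1 (htail j (not_lt.1 hj)).2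

lemma ofCoordKey_comp_mem_repS (hkm : 0 ≤ km) {i : ℕ} (hi : i ≤ r) {ξ : Fin i → ℝ}
    (hξ : ξ ∈ DkSet α β km i) {g : Fin r → ℝ} (hg : Monotone g)
    (hpre : ∀ j : Fin r, ∀ h : (j : ℕ) < i, g j = ξ ⟨j, h⟩)
    (htail : ∀ j : Fin r, i ≤ (j : ℕ) → 0 ≤ g j) :
    ofCoordKey ∘ g ∈ repS α β km r := by
  refine ⟨i, hi, ξ, hξ, fun j hj => ?_, fun j hj => ?_, fun p q hq hqp => ?_⟩
  · simp [hpre j hj, ofCoordKey_of_neg (DkSet.lt_zero hkm hξ _)]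
  · simp [ofCoordKey_of_nonneg (htail j hj), htail j hj]
  · simpa [ofCoordKey_of_nonneg (htail q hq), ofCoordKey_of_nonneg (htail p (hq.trans hqp))]
      using hg hqp

end repS

lemma wActC_eq_of_mem_repS {α β km : ℝ} (hkm : 0 ≤ km) {r : ℕ} {z : Fin r → ℂ}
    {ε ε' : Fin r → ℤˣ} {σ σ' : Equiv.Perm (Fin r)} (hs : wActC r ε σ z ∈ repS α β km r)
    (hs' : wActC r ε' σ' z ∈ repS α β km r) : wActC r ε' σ' z = wActC r ε σ z := by
  have hperm : (coordKey ∘ wActC r ε σ z) ∘ (σ * σ'⁻¹) = coordKey ∘ wActC r ε' σ' z := by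
    funext j
    simp [coordKey_wActC]
  have hkey : coordKey ∘ wActC r ε' σ' z = coordKey ∘ wActC r ε σ z :=
    hperm ▸ comp_perm_eq_of_monotone (monotone_coordKey_comp_of_mem_repS hkm hs)
      (hperm ▸ monotone_coordKey_comp_of_mem_repS hkm hs')
  funext j
  rw [← ofCoordKey_coordKey_of_mem_repS hkm hs' j, ← ofCoordKey_coordKey_of_mem_repS hkm hs j]
  exact congrArg ofCoordKey (congrFun hkey j)

section baseSet

variable {α β km : ℝ} {r i : ℕ} {ξ : Fin i → ℝ} {z₀ : Fin r → ℂ}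

lemma coordKey_of_mem_baseSet_of_lt (hkm : 0 ≤ km) (hξ : ξ ∈ DkSet α β km i)
    (hz₀ : z₀ ∈ baseSet r i ξ) (j : Fin r) (hj : (j : ℕ) < i) : coordKey (z₀ j) = ξ ⟨j, hj⟩ := by
  rw [hz₀.1 j hj, coordKey_ofReal_of_neg (DkSet.lt_zero hkm hξ _)]

lemma coordKey_nonneg_of_mem_baseSet (hz₀ : z₀ ∈ baseSet r i ξ) (j : Fin r) (hj : i ≤ (j : ℕ)) :
    0 ≤ coordKey (z₀ j) := by
  rw [coordKey_of_re_eq_zero (hz₀.2 j hj)]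
  exact abs_nonneg _

lemma monotone_min_coordKey_zero_of_mem_baseSet (hkm : 0 ≤ km) (hξ : ξ ∈ DkSet α β km i)
    (hz₀ : z₀ ∈ baseSet r i ξ) : Monotone fun k => min (coordKey (z₀ k)) 0 := by
  intro p q hpq
  by_cases hq : (q : ℕ) < i
  · have hp : (p : ℕ) < i := lt_of_le_of_lt hpq hq
    simp only [coordKey_of_mem_baseSet_of_lt hkm hξ hz₀ _ hp,
      coordKey_of_mem_baseSet_of_lt hkm hξ hz₀ _ hq]
    exact min_le_min_right 0 (DkSet.monotone hkm hξ hpq)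
  · simp only [min_eq_right (coordKey_nonneg_of_mem_baseSet hz₀ q (not_lt.1 hq))]
    exact min_le_right _ _

lemma sorted_coordKey_of_mem_baseSet (hkm : 0 ≤ km) (hξ : ξ ∈ DkSet α β km i)
    (hz₀ : z₀ ∈ baseSet r i ξ) {π : Equiv.Perm (Fin r)} (hπ : Monotone (coordKey ∘ z₀ ∘ π)) :
    (∀ j : Fin r, ∀ h : (j : ℕ) < i, coordKey (z₀ (π j)) = ξ ⟨j, h⟩) ∧
      ∀ j : Fin r, i ≤ (j : ℕ) → 0 ≤ coordKey (z₀ (π j)) := by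
  have hclip (j : Fin r) : min (coordKey (z₀ (π j))) 0 = min (coordKey (z₀ j)) 0 :=
    congrFun (comp_perm_eq_of_monotone (σ := π)
      (monotone_min_coordKey_zero_of_mem_baseSet hkm hξ hz₀)
      fun p q hpq => min_le_min_right 0 (hπ hpq)) j
  refine ⟨fun j hj => ?_, fun j hj => ?_⟩
  · have hneg := DkSet.lt_zero hkm hξ ⟨j, hj⟩
    have h := hclip j
    rw [coordKey_of_mem_baseSet_of_lt hkm hξ hz₀ j hj, min_eq_left hneg.le] at h
    exact ((min_eq_iff.1 h).resolve_right fun h' => hneg.ne' h'.1).1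
  · have h := hclip j
    rw [min_eq_right (coordKey_nonneg_of_mem_baseSet hz₀ j hj)] at h
    exact min_eq_right_iff.1 h

lemma re_eq_zero_or_im_eq_zero_of_mem_baseSet (hz₀ : z₀ ∈ baseSet r i ξ) (j : Fin r) :
    (z₀ j).re = 0 ∨ (z₀ j).im = 0 := by
  by_cases hj : (j : ℕ) < i
  · exact Or.inr (by simp [hz₀.1 j hj])
  · exact Or.inl (hz₀.2 j (not_lt.1 hj))

lemma exists_wActC_mem_repS (hkm : 0 ≤ km) (hi : i ≤ r) (hξ : ξ ∈ DkSet α β km i)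
    (hz₀ : z₀ ∈ baseSet r i ξ) (ε₀ : Fin r → ℤˣ) (σ₀ : Equiv.Perm (Fin r)) :
    ∃ (ε : Fin r → ℤˣ) (σ : Equiv.Perm (Fin r)),
      wActC r ε σ (wActC r ε₀ σ₀ z₀) ∈ repS α β km r := by
  set z := wActC r ε₀ σ₀ z₀
  set σ := Tuple.sort (coordKey ∘ z)
  have hkey (j : Fin r) : coordKey (z (σ j)) = coordKey (z₀ ((σ₀⁻¹ * σ) j)) := coordKey_wActC ..
  have hsort : Monotone fun j => coordKey (z (σ j)) := Tuple.monotone_sort (coordKey ∘ z)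
  have hsorted : Monotone (coordKey ∘ z₀ ∘ (σ₀⁻¹ * σ)) := fun p q hpq => by
    simpa only [Function.comp_apply, hkey] using hsort hpq
  obtain ⟨hpre, htail⟩ := sorted_coordKey_of_mem_baseSet hkm hξ hz₀ hsorted
  have hz (k : Fin r) : (z k).re = 0 ∨ (z k).im = 0 := by
    rcases Int.units_eq_one_or (ε₀ k) with h | h <;>
      simp [z, wActC, h, re_eq_zero_or_im_eq_zero_of_mem_baseSet hz₀]
  choose ε hε using fun j => exists_ofCoordKey_coordKey_eq_units_mul (hz (σ j))
  refine ⟨ε, σ⁻¹, ?_⟩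
  have hs : wActC r ε σ⁻¹ z = ofCoordKey ∘ fun j => coordKey (z (σ j)) :=
    funext fun j => by simp [wActC, hε]
  rw [hs]
  exact ofCoordKey_comp_mem_repS hkm hi hξ hsort
    (fun j hj => (hkey j).trans (hpre j hj)) fun j hj => (hkey j).symm ▸ htail j hj

end baseSet

theorem stmt10_general (km α β : ℝ) (hkm : 0 ≤ km) (r : ℕ) :
    (∀ (ε : Fin r → ℤˣ) (σ : Equiv.Perm (Fin r)) (z : Fin r → ℂ),
      z ∈ bigP α β km r → wActC r ε σ z ∈ bigP α β km r) ∧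
    (∀ z ∈ bigP α β km r, ∃! s : Fin r → ℂ, s ∈ repS α β km r ∧
      ∃ (ε : Fin r → ℤˣ) (σ : Equiv.Perm (Fin r)), wActC r ε σ z = s) := by
  constructor
  · rintro ε σ z ⟨i, hi, ξ, hξ, ε₀, σ₀, z₀, hz₀, rfl⟩
    exact ⟨i, hi, ξ, hξ, _, _, z₀, hz₀, (wActC_wActC r ε ε₀ σ σ₀ z₀).symm⟩
  · rintro z ⟨i, hi, ξ, hξ, ε₀, σ₀, z₀, hz₀, rfl⟩
    obtain ⟨ε, σ, hs⟩ := exists_wActC_mem_repS hkm hi hξ hz₀ ε₀ σ₀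
    refine ⟨_, ⟨hs, ε, σ, rfl⟩, ?_⟩
    rintro _ ⟨hs', ε', σ', rfl⟩
    exact wActC_eq_of_mem_repS hkm hs hs'

theorem stmt10 (ks km kl α β : ℝ) (hα : α = ks + kl - 1 / 2) (hβ : β = kl - 1 / 2)
    (hkm : 0 ≤ km) (r : ℕ) :
    (∀ (ε : Fin r → ℤˣ) (σ : Equiv.Perm (Fin r)) (z : Fin r → ℂ),
      z ∈ bigP α β km r → wActC r ε σ z ∈ bigP α β km r) ∧
    (∀ z ∈ bigP α β km r, ∃! s : Fin r → ℂ, s ∈ repS α β km r ∧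
      ∃ (ε : Fin r → ℤˣ) (σ : Equiv.Perm (Fin r)), wActC r ε σ z = s) :=
  stmt10_general km α β hkm r
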